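/- In the category of groups there exists a pushout square with horizontal regular epimorphisms that is not a regular pushout: taking B' = 0 (the trivial group), v = in_{A'} : A' → B + A' the coproduct inclusion, and f = [1_B, 0] : B + A' → B, the resulting square is a pushout but the comparison map to the pullback need not be surjective. -/

import Mathlib

universe w v u
noncomputable section
open CategoryTheory CategoryTheory.Limits CategoryTheory.Subobject Opposite
local notation "⦋" n "⦌" => SimplexCategory.mk n

namespace SemiAbPaper
section Base


variable {C : Type u} [Category.{v} C]

/-- A regular epimorphism (propositional form). -/
def IsRegEpi {X Y : C} (f : X ⟶ Y) : Prop := Nonempty (RegularEpi f)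

/-- A regular projective object. -/
def RegularProjective (P : C) : Prop :=
  ∀ {X Y : C} (e : X ⟶ Y), IsRegEpi e → ∀ g : P ⟶ Y, ∃ h : P ⟶ X, h ≫ e = g

/-- `C` has enough regular projectives. -/
def EnoughRegularProjectives (C : Type u) [Category.{v} C] : Prop :=
  ∀ X : C, ∃ (P : C) (p : P ⟶ X), RegularProjective P ∧ IsRegEpi p

/-- A regular category: finitely complete, coequalizers of kernel pairs,
regular epimorphisms stable under pullback. -/
class IsRegularCategory (C : Type u) [Category.{v} C] [HasFiniteLimits C] : Prop where
  hasCoequalizersOfKernelPairs :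
    ∀ {X Y : C} (f : X ⟶ Y), HasColimit (parallelPair (pullback.fst f f) (pullback.snd f f))
  regularEpiPullbackStable :
    ∀ {X Y Z : C} (f : X ⟶ Y) (g : Z ⟶ Y), IsRegEpi f → IsRegEpi (pullback.snd f g)

/-- A semi-abelian category (relative to ambient pointedness and finite completeness):
Barr-exact, Bourn-protomodular, with binary coproducts and a zero object. -/
class IsSemiAbelian (C : Type u) [Category.{v} C] [HasZeroMorphisms C] [HasFiniteLimits C] :
    Prop where
  hasZeroObject : HasZeroObject C
  hasBinaryCoproducts : HasBinaryCoproducts C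
  hasCoequalizersOfKernelPairs :
    ∀ {X Y : C} (f : X ⟶ Y), HasColimit (parallelPair (pullback.fst f f) (pullback.snd f f))
  regularEpiPullbackStable :
    ∀ {X Y Z : C} (f : X ⟶ Y) (g : Z ⟶ Y), IsRegEpi f → IsRegEpi (pullback.snd f g)
  /-- Barr-exactness: every internal equivalence relation is a kernel pair. -/
  exactEquivalenceRelations :
    ∀ {R X : C} (r₀ r₁ : R ⟶ X),
      (∀ {T : C} (a b : T ⟶ R), a ≫ r₀ = b ≫ r₀ → a ≫ r₁ = b ≫ r₁ → a = b) →
      (∀ T : C, _root_.Equivalence fun x y : T ⟶ X => ∃ t : T ⟶ R, t ≫ r₀ = x ∧ t ≫ r₁ = y) →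
      ∃ (Y : C) (f : X ⟶ Y), IsKernelPair f r₀ r₁
  /-- Bourn-protomodularity: the Short Five Lemma. -/
  protomodular :
    ∀ {E' B' E B : C} (p' : E' ⟶ B') (p : E ⟶ B), IsRegEpi p' → IsRegEpi p →
      ∀ (v : E' ⟶ E) (w : B' ⟶ B), p' ≫ w = v ≫ p →
      ∀ u : kernel p' ⟶ kernel p, u ≫ kernel.ι p = kernel.ι p' ≫ v →
      IsIso u → IsIso w → IsIso v


end Base

section MoorePart

variable {C : Type u} [Category.{v} C] [HasZeroMorphisms C] [HasFiniteLimits C]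

namespace Moore

variable (X : SimplicialObject C)

/-- The `n`-th object of the Moore complex of `X`:
the intersection of the kernels of `∂ᵢ : Xₙ ⟶ X_{n-1}` for `0 ≤ i ≤ n-1`. -/
def NSub : ∀ n : ℕ, Subobject (X.obj (op ⦋n⦌))
  | 0 => ⊤
  | n + 1 => Finset.univ.inf fun k : Fin (n + 1) => kernelSubobject (X.δ k.castSucc)

/-- The `n`-th object of the Moore complex, as an object of `C`. -/
def NObj (n : ℕ) : C := (NSub X n : C)

theorem arrow_comp_δ_castSucc (n : ℕ) (i : Fin (n + 1)) :
    (NSub X (n + 1)).arrow ≫ X.δ i.castSucc = 0 := by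
  show (Finset.univ.inf fun k : Fin (n + 1) =>
      kernelSubobject (X.δ k.castSucc)).arrow ≫ X.δ i.castSucc = 0
  rw [← factorThru_arrow _ _ (finset_inf_arrow_factors Finset.univ
      (fun k : Fin (n + 1) => kernelSubobject (X.δ k.castSucc)) i (Finset.mem_univ _)),
    Category.assoc, kernelSubobject_arrow_comp, comp_zero]

/-- The differential `dₙ₊₁ : Nₙ₊₁X ⟶ NₙX` of the Moore complex, induced by the
last face `∂ₙ₊₁`. -/
def MooreD : ∀ n : ℕ, NObj X (n + 1) ⟶ NObj X n
  | 0 => (NSub X 1).arrow ≫ X.δ (Fin.last 1) ≫ @inv _ _ _ _ (⊤ : Subobject (X.obj (op ⦋0⦌))).arrow Subobject.isIso_top_arrow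
  | n + 1 =>
    factorThru _ ((NSub X (n + 2)).arrow ≫ X.δ (Fin.last (n + 2))) (by
      refine (finset_inf_factors _).mpr fun i _ => ?_
      apply kernelSubobject_factors
      show ((NSub X (n + 2)).arrow ≫ X.δ (Fin.last (n + 2))) ≫ X.δ i.castSucc = 0
      rw [Category.assoc,
        show X.δ (Fin.last (n + 2)) = X.δ ((Fin.last (n + 1)).succ) from by rw [Fin.succ_last],
        X.δ_comp_δ (Fin.le_last i.castSucc), ← Category.assoc,
        arrow_comp_δ_castSucc, zero_comp])

theorem d_squared (n : ℕ) : MooreD X (n + 1) ≫ MooreD X n = 0 := by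
  rcases n with _ | n <;> dsimp [MooreD]
  · erw [factorThru_arrow_assoc,
      show X.δ (Fin.last 2) = X.δ ((Fin.last 1).succ) from by rw [Fin.succ_last],
      Category.assoc, X.δ_comp_δ_assoc (le_refl (Fin.last 1)), ← Category.assoc,
      arrow_comp_δ_castSucc, zero_comp]
  · apply (cancel_mono (NSub X (n + 1)).arrow).1
    erw [Category.assoc, factorThru_arrow, factorThru_arrow_assoc,
      show X.δ (Fin.last (n + 3)) = X.δ ((Fin.last (n + 2)).succ) from by rw [Fin.succ_last],
      Category.assoc, X.δ_comp_δ (le_refl (Fin.last (n + 2))), ← Category.assoc,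
      arrow_comp_δ_castSucc, zero_comp, zero_comp]

variable [HasCokernels C]

/-- The homology `HₙX` of the Moore complex of `X`:
the cokernel of the factorization of `dₙ₊₁` through the kernel of `dₙ`. -/
def H : ℕ → C
  | 0 => cokernel (MooreD X 0)
  | n + 1 => cokernel (kernel.lift (MooreD X n) (MooreD X (n + 1)) (d_squared X n))

/-- The object of `n`-cycles `ZₙX = ⋂_{i ∈ [n]} K[∂ᵢ]`
(realized as `X₀` for `n = 0` and as the kernel of `dₙ` for `n ≥ 1`). -/
def Z : ℕ → C
  | 0 => X.obj (op ⦋0⦌)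
  | n + 1 => kernel (MooreD X n)

/-- The monomorphism `ZₙX ⟶ Xₙ`. -/
def zArrow : ∀ n : ℕ, Z X n ⟶ X.obj (op ⦋n⦌)
  | 0 => 𝟙 _
  | n + 1 => kernel.ι (MooreD X n) ≫ (NSub X (n + 1)).arrow

/-- The canonical quotient map `qₙ : ZₙX ⟶ HₙX`. -/
def q : ∀ n : ℕ, Z X n ⟶ H X n
  | 0 => @inv _ _ _ _ (⊤ : Subobject (X.obj (op ⦋0⦌))).arrow Subobject.isIso_top_arrow ≫ cokernel.π (MooreD X 0)
  | n + 1 => cokernel.π (kernel.lift (MooreD X n) (MooreD X (n + 1)) (d_squared X n))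

end Moore

end MoorePart

section NablaPart

variable {C : Type u} [Category.{v} C] [HasFiniteLimits C]

namespace Nabla

/-- Pairs `i < j` in `[n+2]`. -/
def PairIdx (n : ℕ) : Type := {p : Fin (n + 3) × Fin (n + 3) // p.1 < p.2}

instance (n : ℕ) : Fintype (PairIdx n) := by unfold PairIdx; infer_instance

variable (X : SimplicialObject C)

/-- The object `∇ₙX` of `n`-cycles: `∇₀X = X₀ × X₀`, and for `n ≥ 1`, the subobject of
`Xₙ^{n+2}` of tuples `(x₀, …, x_{n+1})` with `∂ᵢ ∘ xⱼ = ∂_{j-1} ∘ xᵢ` for `i < j` in `[n+1]`. -/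
def obj : ℕ → C
  | 0 => Limits.prod (X.obj (op ⦋0⦌)) (X.obj (op ⦋0⦌))
  | n + 1 =>
    equalizer
      (Pi.lift fun p : PairIdx n =>
        Pi.π (fun _ : Fin (n + 3) => X.obj (op ⦋n + 1⦌)) p.1.2 ≫
          X.δ (⟨p.1.1, by
            have h1 : (p.1.1 : ℕ) < (p.1.2 : ℕ) := p.2
            have h2 : (p.1.2 : ℕ) < n + 3 := p.1.2.isLt
            omega⟩ : Fin (n + 2)))
      (Pi.lift fun p : PairIdx n =>
        Pi.π (fun _ : Fin (n + 3) => X.obj (op ⦋n + 1⦌)) p.1.1 ≫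
          X.δ (⟨(p.1.2 : ℕ) - 1, by
            have h2 : (p.1.2 : ℕ) < n + 3 := p.1.2.isLt
            omega⟩ : Fin (n + 2)))

/-- The projection `prᵢ : ∇ₙX ⟶ Xₙ`. -/
def pr : ∀ (n : ℕ) (_ : Fin (n + 2)), obj X n ⟶ X.obj (op ⦋n⦌)
  | 0, i => if i = 0 then Limits.prod.fst else Limits.prod.snd
  | n + 1, i => equalizer.ι _ _ ≫ Pi.π (fun _ : Fin (n + 3) => X.obj (op ⦋n + 1⦌)) i

/-- The object `∇ₙ(X⁻)`, where `X⁻` is the shifted simplicial object with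
`(X⁻)ₙ = X_{n+1}` and `∂ᵢ⁻ = ∂_{i+1}`. -/
def shiftObj : ℕ → C
  | 0 => Limits.prod (X.obj (op ⦋1⦌)) (X.obj (op ⦋1⦌))
  | n + 1 =>
    equalizer
      (Pi.lift fun p : PairIdx n =>
        Pi.π (fun _ : Fin (n + 3) => X.obj (op ⦋n + 2⦌)) p.1.2 ≫
          X.δ (⟨(p.1.1 : ℕ) + 1, by
            have h1 : (p.1.1 : ℕ) < (p.1.2 : ℕ) := p.2
            have h2 : (p.1.2 : ℕ) < n + 3 := p.1.2.isLt
            omega⟩ : Fin (n + 3)))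
      (Pi.lift fun p : PairIdx n =>
        Pi.π (fun _ : Fin (n + 3) => X.obj (op ⦋n + 2⦌)) p.1.1 ≫
          X.δ (⟨(p.1.2 : ℕ), by
            have h2 : (p.1.2 : ℕ) < n + 3 := p.1.2.isLt
            omega⟩ : Fin (n + 3)))

/-- The projection `prᵢ : ∇ₙ(X⁻) ⟶ X_{n+1}`. -/
def shiftPr : ∀ (n : ℕ) (_ : Fin (n + 2)), shiftObj X n ⟶ X.obj (op ⦋n + 1⦌)
  | 0, i => if i = 0 then Limits.prod.fst else Limits.prod.snd
  | n + 1, i => equalizer.ι _ _ ≫ Pi.π (fun _ : Fin (n + 3) => X.obj (op ⦋n + 2⦌)) i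

end Nabla

end NablaPart

section HornPart

variable {C : Type u} [Category.{v} C]


/-- An `(n+1, k)`-horn of a simplicial object `A` with vertex of definition `X`:
a family `xᵢ : X ⟶ Aₙ` (`i ≠ k`) with `∂ᵢ ∘ xⱼ = ∂_{j-1} ∘ xᵢ` for `i < j`, `i, j ≠ k`. -/
structure HornData (A : SimplicialObject C) (n : ℕ) (k : Fin (n + 2)) (X : C) where
  x : ∀ i : Fin (n + 2), i ≠ k → (X ⟶ A.obj (op ⦋n⦌))
  compat : ∀ (m : ℕ) (hm : n = m + 1) (i j : Fin (n + 2)) (hi : i ≠ k) (hj : j ≠ k)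
      (hij : (i : ℕ) < (j : ℕ)),
      x j hj ≫ eqToHom (by rw [hm]) ≫ A.δ (⟨(i : ℕ), by
          have := j.isLt; omega⟩ : Fin (m + 2)) =
      x i hi ≫ eqToHom (by rw [hm]) ≫ A.δ (⟨(j : ℕ) - 1, by
          have := j.isLt; omega⟩ : Fin (m + 2))

/-- `A` is Kan (internally, up to regular epimorphism). -/
def IsKanObject (A : SimplicialObject C) : Prop :=
  ∀ (n : ℕ) (k : Fin (n + 2)) (X : C) (h : HornData A n k X),
    ∃ (Y : C) (p : Y ⟶ X), IsRegEpi p ∧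
      ∃ a : Y ⟶ A.obj (op ⦋n + 1⦌), ∀ (i : Fin (n + 2)) (hi : i ≠ k), a ≫ A.δ i = p ≫ h.x i hi

/-- `f : A ⟶ B` is a Kan fibration (internally, up to regular epimorphism). -/
def IsKanFibration {A B : SimplicialObject C} (f : A ⟶ B) : Prop :=
  ∀ (n : ℕ) (k : Fin (n + 2)) (X : C) (h : HornData A n k X) (b : X ⟶ B.obj (op ⦋n + 1⦌)),
    (∀ (i : Fin (n + 2)) (hi : i ≠ k), b ≫ B.δ i = h.x i hi ≫ f.app (op ⦋n⦌)) →
    ∃ (Y : C) (p : Y ⟶ X), IsRegEpi p ∧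
      ∃ a : Y ⟶ A.obj (op ⦋n + 1⦌), a ≫ f.app (op ⦋n + 1⦌) = p ≫ b ∧
        ∀ (i : Fin (n + 2)) (hi : i ≠ k), a ≫ A.δ i = p ≫ h.x i hi

/-- A simplicial set (simplicial object of `Type`) is a Kan complex. -/
def IsKanSSet (K : SimplicialObject (Type w)) : Prop :=
  ∀ (n : ℕ) (k : Fin (n + 2)) (x : ∀ i : Fin (n + 2), i ≠ k → K.obj (op ⦋n⦌)),
    (∀ (m : ℕ) (hm : n = m + 1) (i j : Fin (n + 2)) (hi : i ≠ k) (hj : j ≠ k)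
      (hij : (i : ℕ) < (j : ℕ)),
      K.δ (⟨(i : ℕ), by have := j.isLt; omega⟩ : Fin (m + 2)) (_root_.cast (show K.obj (op ⦋n⦌) = K.obj (op ⦋m+1⦌) by rw [hm]) (x j hj)) =
      K.δ (⟨(j : ℕ) - 1, by have := j.isLt; omega⟩ : Fin (m + 2))
        (_root_.cast (show K.obj (op ⦋n⦌) = K.obj (op ⦋m+1⦌) by rw [hm]) (x i hi))) →
    ∃ y : K.obj (op ⦋n + 1⦌), ∀ (i : Fin (n + 2)) (hi : i ≠ k), K.δ i y = x i hi

/-- A map of simplicial sets is a Kan fibration. -/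
def IsKanFibrationSSet {K L : SimplicialObject (Type w)} (g : K ⟶ L) : Prop :=
  ∀ (n : ℕ) (k : Fin (n + 2)) (x : ∀ i : Fin (n + 2), i ≠ k → K.obj (op ⦋n⦌)),
    (∀ (m : ℕ) (hm : n = m + 1) (i j : Fin (n + 2)) (hi : i ≠ k) (hj : j ≠ k)
      (hij : (i : ℕ) < (j : ℕ)),
      K.δ (⟨(i : ℕ), by have := j.isLt; omega⟩ : Fin (m + 2)) (_root_.cast (show K.obj (op ⦋n⦌) = K.obj (op ⦋m+1⦌) by rw [hm]) (x j hj)) =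
      K.δ (⟨(j : ℕ) - 1, by have := j.isLt; omega⟩ : Fin (m + 2))
        (_root_.cast (show K.obj (op ⦋n⦌) = K.obj (op ⦋m+1⦌) by rw [hm]) (x i hi))) →
    ∀ b : L.obj (op ⦋n + 1⦌),
      (∀ (i : Fin (n + 2)) (hi : i ≠ k), L.δ i b = g.app (op ⦋n⦌) (x i hi)) →
      ∃ a : K.obj (op ⦋n + 1⦌), g.app (op ⦋n + 1⦌) a = b ∧
        ∀ (i : Fin (n + 2)) (hi : i ≠ k), K.δ i a = x i hi

/-- The simplicial set `hom(P, A)`. -/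
def homSimplicial (P : C) (A : SimplicialObject C) : SimplicialObject (Type v) :=
  A ⋙ coyoneda.obj (op P)

/-- The map of simplicial sets `hom(P, f)`. -/
def homSimplicialMap (P : C) {A B : SimplicialObject C} (f : A ⟶ B) :
    homSimplicial P A ⟶ homSimplicial P B :=
  Functor.whiskerRight f (coyoneda.obj (op P))


end HornPart

section SSetPart


variable {K L : SimplicialObject (Type w)}

/-- The iterated degeneracy `σ₀ⁿ(x)` of a vertex `x`. -/
def bpt (K : SimplicialObject (Type w)) (x : K.obj (op ⦋0⦌)) : ∀ n : ℕ, K.obj (op ⦋n⦌)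
  | 0 => x
  | n + 1 => K.σ (0 : Fin (n + 1)) (bpt K x n)

/-- `Zₙ(K, x)`: the `n`-simplices all of whose faces are the basepoint. -/
def SZ (K : SimplicialObject (Type w)) (x : K.obj (op ⦋0⦌)) : ℕ → Type w
  | 0 => K.obj (op ⦋0⦌)
  | n + 1 => { z : K.obj (op (SimplexCategory.mk (n + 1))) // ∀ i : Fin (n + 2), K.δ i z = bpt K x n }

/-- The underlying `n`-simplex of an element of `Zₙ(K, x)`. -/
def szVal {K : SimplicialObject (Type w)} {x : K.obj (op ⦋0⦌)} : ∀ {n : ℕ}, SZ K x n → K.obj (op ⦋n⦌)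
  | 0, z => z
  | _ + 1, z => z.1

/-- The homotopy relation on `Zₙ(K, x)`: `z ∼ z'` iff there is `y ∈ K_{n+1}` with
`∂ᵢ(y) = x` for `i < n`, `∂ₙ(y) = z` and `∂_{n+1}(y) = z'`. -/
def hRel (K : SimplicialObject (Type w)) (x : K.obj (op ⦋0⦌)) (n : ℕ) (z z' : SZ K x n) : Prop :=
  ∃ y : K.obj (op ⦋n + 1⦌),
    (∀ i : Fin (n + 2), (i : ℕ) < n → K.δ i y = bpt K x n) ∧
    K.δ (⟨n, by omega⟩ : Fin (n + 2)) y = szVal z ∧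
    K.δ (Fin.last (n + 1)) y = szVal z'

/-- The homotopy "group" `πₙ(K, x)` as a quotient set. -/
def piSet (K : SimplicialObject (Type w)) (x : K.obj (op ⦋0⦌)) (n : ℕ) : Type w :=
  Quot (hRel K x n)

theorem δ_app (g : K ⟶ L) {n : ℕ} (i : Fin (n + 2)) (z : K.obj (op ⦋n + 1⦌)) :
    L.δ i (g.app (op ⦋n + 1⦌) z) = g.app (op ⦋n⦌) (K.δ i z) := by
  have := ConcreteCategory.congr_hom (g.naturality ((SimplexCategory.δ i).op)) z
  simpa [SimplicialObject.δ] using this.symm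

theorem σ_app (g : K ⟶ L) {n : ℕ} (i : Fin (n + 1)) (z : K.obj (op ⦋n⦌)) :
    L.σ i (g.app (op ⦋n⦌) z) = g.app (op ⦋n + 1⦌) (K.σ i z) := by
  have := ConcreteCategory.congr_hom (g.naturality ((SimplexCategory.σ i).op)) z
  simpa [SimplicialObject.σ] using this.symm

theorem bpt_app (g : K ⟶ L) (x : K.obj (op ⦋0⦌)) :
    ∀ n : ℕ, g.app (op ⦋n⦌) (bpt K x n) = bpt L (g.app (op ⦋0⦌) x) n
  | 0 => rfl
  | n + 1 => by rw [bpt, bpt, ← bpt_app g x n, σ_app]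

/-- The map `Zₙ(K, x) → Zₙ(L, g(x))` induced by `g : K ⟶ L`. -/
def szMap (g : K ⟶ L) (x : K.obj (op ⦋0⦌)) : ∀ n : ℕ, SZ K x n → SZ L (g.app (op ⦋0⦌) x) n
  | 0, z => g.app (op ⦋0⦌) z
  | n + 1, z => ⟨g.app (op ⦋n + 1⦌) z.1, fun i => by
      rw [δ_app, z.2 i, bpt_app]⟩

theorem szVal_szMap (g : K ⟶ L) (x : K.obj (op ⦋0⦌)) :
    ∀ (n : ℕ) (z : SZ K x n), szVal (szMap g x n z) = g.app (op ⦋n⦌) (szVal z)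
  | 0, _ => rfl
  | _ + 1, _ => rfl

/-- The map `πₙ(K, x) → πₙ(L, g(x))` induced by `g : K ⟶ L`. -/
def piMap (g : K ⟶ L) (x : K.obj (op ⦋0⦌)) (n : ℕ) :
    piSet K x n → piSet L (g.app (op ⦋0⦌) x) n :=
  Quot.map (szMap g x n) (by
    rintro z z' ⟨y, h1, h2, h3⟩
    refine ⟨g.app (op ⦋n + 1⦌) y, fun i hi => by rw [δ_app, h1 i hi, bpt_app], ?_, ?_⟩
    · rw [δ_app, h2, szVal_szMap]
    · rw [δ_app, h3, szVal_szMap])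

/-- `g : K ⟶ L` is a weak equivalence of simplicial sets: it induces bijections on
all homotopy groups at all basepoints. -/
def IsWeakEquivalenceSSet (g : K ⟶ L) : Prop :=
  ∀ (n : ℕ) (x : K.obj (op ⦋0⦌)), Function.Bijective (piMap g x n)


end SSetPart


section HMapPart
variable {C : Type u} [Category.{v} C] [HasZeroMorphisms C] [HasFiniteLimits C] [HasCokernels C]

/-- The data of the morphisms induced by a simplicial morphism `f : A ⟶ B` on Moore
complexes, on cycles, and on homology; each component is uniquely determined by the
stated compatibility. -/
structure HMapData {A B : SimplicialObject C} (f : A ⟶ B) where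
  ν : ∀ n : ℕ, Moore.NObj A n ⟶ Moore.NObj B n
  hν : ∀ n : ℕ, ν n ≫ (Moore.NSub B n).arrow = (Moore.NSub A n).arrow ≫ f.app (op ⦋n⦌)
  κ : ∀ n : ℕ, kernel (Moore.MooreD A n) ⟶ kernel (Moore.MooreD B n)
  hκ : ∀ n : ℕ, κ n ≫ kernel.ι (Moore.MooreD B n) = kernel.ι (Moore.MooreD A n) ≫ ν (n + 1)
  η : ∀ n : ℕ, Moore.H A n ⟶ Moore.H B n
  hη₀ : cokernel.π (Moore.MooreD A 0) ≫ η 0 = ν 0 ≫ cokernel.π (Moore.MooreD B 0)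
  hη : ∀ n : ℕ,
    cokernel.π (kernel.lift (Moore.MooreD A n) (Moore.MooreD A (n + 1)) (Moore.d_squared A n)) ≫
        η (n + 1) =
      κ n ≫
        cokernel.π (kernel.lift (Moore.MooreD B n) (Moore.MooreD B (n + 1)) (Moore.d_squared B n))

/-- `f` is a homology isomorphism. -/
def IsHomologyIso {A B : SimplicialObject C} (f : A ⟶ B) : Prop :=
  ∀ d : HMapData f, ∀ n : ℕ, IsIso (d.η n)

end HMapPart


end SemiAbPaper

/-!
For `b ≠ 1` in `B` and `a ≠ 1` in `A'`, the pullback of `0 ⟶ B` along `[1_B, 0]` is the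
kernel of `[1_B, 0]`, which contains `b a b⁻¹`. If this element came from `A'`, projecting
onto `A'` would show that `b` and `a` commute in `B ∗ A'`. They do not: let `B` act by left
multiplication on the points `(x, 1)` of `B × A'` and `A'` on the points `(1, y)`; starting
from `(1, 1)`, `b a` ends at `(1, a)` and `a b` at `(b, 1)`.
-/

namespace Equiv.Perm

variable {G X : Type*} [Group G] {p : X → Prop} [DecidablePred p]

def mulLeftOnSubtype (e : G ≃ Subtype p) : G →* Perm X :=
  ofSubtype.comp (e.permCongrHom.toMonoidHom.comp (MulAction.toPermHom G G))

theorem mulLeftOnSubtype_apply_of_mem (e : G ≃ Subtype p) (g x : G) :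
    mulLeftOnSubtype e g (e x) = e (g * x) := by
  simp [mulLeftOnSubtype, Equiv.permCongr_apply]

theorem mulLeftOnSubtype_apply_of_not_mem (e : G ≃ Subtype p) (g : G) {y : X} (hy : ¬p y) :
    mulLeftOnSubtype e g y = y := by
  simp [mulLeftOnSubtype, ofSubtype_apply_of_not_mem _ hy]

end Equiv.Perm

namespace Monoid.Coprod

variable {G H : Type*} [Group G] [Group H]

theorem not_commute_inl_inr {g : G} {h : H} (hg : g ≠ 1) (hh : h ≠ 1) :
    ¬Commute (inl g : G ∗ H) (inr h) := by
  classical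
  let eG : G ≃ {q : G × H // q.2 = 1} :=
    { toFun x := ⟨(x, 1), rfl⟩, invFun q := q.1.1, left_inv _ := rfl,
      right_inv q := Subtype.ext (Prod.ext rfl q.2.symm) }
  let eH : H ≃ {q : G × H // q.1 = 1} :=
    { toFun y := ⟨(1, y), rfl⟩, invFun q := q.1.2, left_inv _ := rfl,
      right_inv q := Subtype.ext (Prod.ext q.2.symm rfl) }
  let φ : G ∗ H →* Equiv.Perm (G × H) :=
    lift (Equiv.Perm.mulLeftOnSubtype eG) (Equiv.Perm.mulLeftOnSubtype eH)
  intro hcomm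
  have hφ := congrArg (fun x => φ x (1, 1)) hcomm.eq
  have h1 : φ (inl g * inr h) (1, 1) = (1, h) := by
    simp only [φ, map_mul, lift_apply_inl, lift_apply_inr, Equiv.Perm.mul_apply]
    rw [show ((1, 1) : G × H) = eH 1 from rfl, Equiv.Perm.mulLeftOnSubtype_apply_of_mem, mul_one]
    exact Equiv.Perm.mulLeftOnSubtype_apply_of_not_mem eG g hh
  have h2 : φ (inr h * inl g) (1, 1) = (g, 1) := by
    simp only [φ, map_mul, lift_apply_inl, lift_apply_inr, Equiv.Perm.mul_apply]
    rw [show ((1, 1) : G × H) = eG 1 from rfl, Equiv.Perm.mulLeftOnSubtype_apply_of_mem, mul_one]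
    exact Equiv.Perm.mulLeftOnSubtype_apply_of_not_mem eH h hg
  simp only [h1, h2, Prod.mk.injEq] at hφ
  exact hg hφ.1.symm

theorem inl_mul_inr_mul_inl_inv_notMem_range_inr {g : G} {h : H} (hg : g ≠ 1) (hh : h ≠ 1) :
    inl g * inr h * (inl g)⁻¹ ∉ (inr : H →* G ∗ H).range := by
  rintro ⟨h', hh'⟩
  have : h' = h := by simpa using congrArg snd hh'
  subst this
  exact not_commute_inl_inr hg hh (mul_inv_eq_iff_eq_mul.mp hh'.symm)

end Monoid.Coprod

namespace GrpCat

open Monoid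
open scoped Monoid.Coprod

variable (G H : GrpCat.{u})

def coprodCofanIsColimit :
    IsColimit (BinaryCofan.mk (ofHom (Coprod.inl : G →* G ∗ H)) (ofHom Coprod.inr)) :=
  BinaryCofan.IsColimit.mk _ (fun f g ↦ ofHom (Coprod.lift f.hom g.hom)) (fun _ _ ↦ rfl)
    (fun _ _ ↦ rfl)
    (fun _ _ _ h₁ h₂ ↦ hom_ext (Coprod.hom_ext (congrArg Hom.hom h₁) (congrArg Hom.hom h₂)))

theorem isSplitEpi_toPUnit : IsSplitEpi (ofHom 1 : G ⟶ of PUnit) :=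
  IsSplitEpi.mk' ⟨ofHom 1, rfl⟩

theorem isSplitEpi_fst : IsSplitEpi (ofHom Coprod.fst : of (G ∗ H) ⟶ G) :=
  IsSplitEpi.mk' ⟨ofHom Coprod.inl, rfl⟩

theorem isPushout_inr_fst :
    IsPushout (ofHom 1 : H ⟶ of PUnit) (ofHom (Coprod.inr : H →* G ∗ H)) (ofHom 1)
      (ofHom Coprod.fst) := by
  refine .of_isColimit' ⟨rfl⟩ (PushoutCocone.IsColimit.mk _ (fun s ↦ ofHom Coprod.inl ≫ s.inr)
    (fun _ ↦ (isZero_of_subsingleton (of PUnit)).eq_of_src _ _) (fun s ↦ ?_) (fun s m _ hm ↦ ?_))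
  · refine hom_ext (Coprod.hom_ext rfl (MonoidHom.ext fun a ↦ ?_))
    simpa using ConcreteCategory.congr_hom s.condition a
  · rw [← hm]; rfl

variable {G H}

theorem exists_of_isPullback {P X Y Z : GrpCat.{u}} {fst : P ⟶ X} {snd : P ⟶ Y} {f : X ⟶ Z}
    {g : Y ⟶ Z} (h : IsPullback fst snd f g) (x : X) (y : Y) (hxy : f x = g y) :
    ∃ p, fst p = x ∧ snd p = y :=
  Types.exists_of_isPullback (h.map (forget GrpCat)) x y hxy

theorem not_surjective_of_comp_eq_inr [Nontrivial G] [Nontrivial H] {P : GrpCat.{u}}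
    {p₁ : P ⟶ of (G ∗ H)} {p₂ : P ⟶ of PUnit}
    (hP : IsPullback p₁ p₂ (ofHom Coprod.fst) (ofHom 1)) {c : H ⟶ P}
    (hc : c ≫ p₁ = ofHom Coprod.inr) : ¬Function.Surjective c := by
  obtain ⟨g, hg⟩ := exists_ne (1 : G)
  obtain ⟨h, hh⟩ := exists_ne (1 : H)
  obtain ⟨p, hp, -⟩ :=
    exists_of_isPullback hP (Coprod.inl g * Coprod.inr h * (Coprod.inl g)⁻¹) 1 (by simp)
  intro hc_surj
  obtain ⟨a, rfl⟩ := hc_surj p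
  refine Coprod.inl_mul_inr_mul_inl_inv_notMem_range_inr hg hh ⟨a, ?_⟩
  rw [← hp]
  exact (ConcreteCategory.congr_hom hc a).symm

end GrpCat

namespace SemiAbPaper

theorem isRegEpi_of_isSplitEpi {C : Type u} [Category.{v} C] {X Y : C} {f : X ⟶ Y}
    (hf : IsSplitEpi f) : IsRegEpi f :=
  ⟨RegularEpi.ofSplitEpi f⟩

/-- In the category of groups there is a pushout square with horizontal
regular epimorphisms (`f' : A' ⟶ 0` and `f = [1_B, 0] : B + A' ⟶ B`, with the coproduct
inclusion `inr : A' ⟶ B + A'` as left vertical map) which is not a regular pushout: the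
comparison map to the pullback of `w` along `f` is not surjective. -/
theorem pushout_not_regular_pushout_in_groups :
    ∃ (A' B : GrpCat) (_ : Nontrivial ↑A') (_ : Nontrivial ↑B)
      (S : GrpCat) (inl : B ⟶ S) (inr : A' ⟶ S),
      -- `S`, with the injections `inl`, `inr`, is the coproduct (free product) `B + A'`
      Nonempty (IsColimit (BinaryCofan.mk inl inr)) ∧
      ∃ (f : S ⟶ B) (f' : A' ⟶ GrpCat.of PUnit) (w : GrpCat.of PUnit ⟶ B),
        -- `f = [1_B, 0]` and the square commutes
        inl ≫ f = 𝟙 B ∧ inr ≫ f = f' ≫ w ∧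
        -- both horizontal maps are regular epimorphisms
        IsRegEpi f' ∧ IsRegEpi f ∧
        -- the square is a pushout
        IsPushout f' inr w f ∧
        -- ... but not a regular pushout: the comparison map to the pullback of `w`
        -- along `f` is not surjective
        (∀ (PB : GrpCat) (p₁ : PB ⟶ S) (p₂ : PB ⟶ GrpCat.of PUnit) (hcomm : p₁ ≫ f = p₂ ≫ w),
          Nonempty (IsLimit (PullbackCone.mk p₁ p₂ hcomm)) →
          ∀ c : A' ⟶ PB, c ≫ p₁ = inr → ¬ Function.Surjective ((forget GrpCat).map c)) := by
  let G := GrpCat.of (ULift (Multiplicative (ZMod 2)))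
  refine ⟨G, G, inferInstance, inferInstance, GrpCat.of (Monoid.Coprod G G),
    GrpCat.ofHom Monoid.Coprod.inl, GrpCat.ofHom Monoid.Coprod.inr,
    ⟨GrpCat.coprodCofanIsColimit G G⟩, GrpCat.ofHom Monoid.Coprod.fst, GrpCat.ofHom 1,
    GrpCat.ofHom 1, rfl, rfl, isRegEpi_of_isSplitEpi (GrpCat.isSplitEpi_toPUnit G),
    isRegEpi_of_isSplitEpi (GrpCat.isSplitEpi_fst G G),
    GrpCat.isPushout_inr_fst G G, ?_⟩
  rintro PB p₁ p₂ hcomm ⟨hlim⟩ c hc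
  exact GrpCat.not_surjective_of_comp_eq_inr (IsPullback.of_isLimit hlim) hc

end SemiAbPaper
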